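/- arXiv:2009.12189 — 5 statements merged into one kernel-verified Lean document; each statement's English description precedes it below -/
import Mathlib

section
/- If a graph G admits an acyclic 5-coloring (a proper 5-coloring in which the union of any two color classes induces a forest), then G has fractional vertex-arboricity at most 5/2. -/
open MeasureTheory

variable {V : Type*}

/-- `φ` is a fractional `k`-arborization of `G`: each vertex gets a measurable subset of
`(0, k)` of Lebesgue measure one, and every level set induces a forest. -/
def FracArb (G : SimpleGraph V) (k : ℝ) (φ : V → Set ℝ) : Prop :=
  (∀ v, MeasurableSet (φ v)) ∧ (∀ v, φ v ⊆ Set.Ioo 0 k) ∧ (∀ v, volume (φ v) = 1) ∧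
    ∀ α : ℝ, (G.induce {v | α ∈ φ v}).IsAcyclic

/-- `G` has a fractional `k`-arborization. -/
def HasFracArb (G : SimpleGraph V) (k : ℝ) : Prop := ∃ φ, FracArb G k φ

/-- The fractional vertex-arboricity of `G`. -/
noncomputable def fva (G : SimpleGraph V) : ℝ := sInf {k : ℝ | 0 < k ∧ HasFracArb G k}

/-- The vertex-arboricity of `G`: least `k` admitting a partition into `k` forests. -/
noncomputable def va (G : SimpleGraph V) : ℕ :=
  sInf {k : ℕ | ∃ c : V → Fin k, ∀ i, (G.induce {v | c v = i}).IsAcyclic}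

/-- The maximum size of a set of vertices inducing a forest in `G`. -/
noncomputable def maxIndForest (G : SimpleGraph V) [Fintype V] : ℕ :=
  sSup {n : ℕ | ∃ S : Finset V, (G.induce (S : Set V)).IsAcyclic ∧ S.card = n}

/-- `H` is a minor of `G` (branch-set formulation). -/
def IsMinor {α : Type*} {β : Type*} (H : SimpleGraph α) (G : SimpleGraph β) : Prop :=
  ∃ f : α → Set β, (∀ a, (f a).Nonempty) ∧ (∀ a, (G.induce (f a)).Connected) ∧
    (Pairwise fun a b => Disjoint (f a) (f b)) ∧
    ∀ a b, H.Adj a b → ∃ x ∈ f a, ∃ y ∈ f b, G.Adj x y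

/-- Planarity, via Wagner's theorem: no `K₅` minor and no `K₃,₃` minor. -/
def Planar (G : SimpleGraph V) : Prop :=
  ¬ IsMinor (SimpleGraph.completeGraph (Fin 5)) G ∧
    ¬ IsMinor (completeBipartiteGraph (Fin 3) (Fin 3)) G

/-- Number of neighbors of `v` of degree at least three. -/
def effDeg (G : SimpleGraph V) [Fintype V] [DecidableRel G.Adj] (v : V) : ℕ :=
  ((G.neighborFinset v).filter fun u => 3 ≤ G.degree u).card

/-- `v` is light: effective degree at most three and degree at most five. -/
def Light (G : SimpleGraph V) [Fintype V] [DecidableRel G.Adj] (v : V) : Prop :=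
  effDeg G v ≤ 3 ∧ G.degree v ≤ 5

/-- `G` is `k`-arborically critical. -/
def ArbCritical (G : SimpleGraph V) (k : ℚ) : Prop :=
  (k : ℝ) < fva G ∧ ∀ H : G.Subgraph, H ≠ ⊤ → fva H.coe ≤ (k : ℝ)

instance (G : SimpleGraph V) [Fintype V] [DecidableRel G.Adj] (v : V) :
    Decidable (Light G v) := inferInstanceAs (Decidable (_ ∧ _))

/-!
Spread the five colours around a circle of circumference `5/2` as unit arcs starting at
`0, 1, 2, 1/2, 3/2`. Every point of the circle then lies in the arcs of at most two colours, so each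
level set of the resulting arborization is contained in the union of two colour classes, which
induces a forest because the colouring is acyclic.
-/

open MeasureTheory Set

theorem fva_le_of_hasFracArb {G : SimpleGraph V} {k : ℝ} (hk : 0 < k) (h : HasFracArb G k) :
    fva G ≤ k :=
  csInf_le ⟨0, fun _ hx => hx.1.le⟩ ⟨hk, h⟩

theorem hasFracArb_of_coloring {ι : Type*} {G : SimpleGraph V} (c : V → ι)
    (hc : ∀ i j, (G.induce {v | c v = i ∨ c v = j}).IsAcyclic) {k : ℝ} (S : ι → Set ℝ)
    (hmeas : ∀ i, MeasurableSet (S i)) (hsub : ∀ i, S i ⊆ Ioo 0 k) (hvol : ∀ i, volume (S i) = 1)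
    (hpair : ∀ α, ∃ i j, ∀ l, α ∈ S l → l = i ∨ l = j) :
    HasFracArb G k := by
  refine ⟨S ∘ c, fun _ => hmeas _, fun _ => hsub _, fun _ => hvol _, fun α => ?_⟩
  obtain ⟨i, j, hij⟩ := hpair α
  exact (hc i j).embedding (G.induceHomOfLE fun v hv => hij _ hv)

def fiveColorArc : Fin 5 → Set ℝ
  | 0 => Ioo 0 1
  | 1 => Ioo 1 2
  | 2 => Ioo 2 (5/2) ∪ Ioo 0 (1/2)
  | 3 => Ioo (1/2) (3/2)
  | 4 => Ioo (3/2) (5/2)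

lemma measurableSet_fiveColorArc (i : Fin 5) : MeasurableSet (fiveColorArc i) := by
  fin_cases i <;> simp only [fiveColorArc] <;> measurability

lemma fiveColorArc_subset (i : Fin 5) : fiveColorArc i ⊆ Ioo 0 (5/2) := by
  fin_cases i <;> intro x <;> simp only [fiveColorArc, mem_Ioo, mem_union] <;> grind

lemma volume_fiveColorArc (i : Fin 5) : volume (fiveColorArc i) = 1 := by
  have hdisj : Disjoint (Ioo (2 : ℝ) (5/2)) (Ioo 0 (1/2)) :=
    disjoint_left.2 fun x hx hx' => by linarith [hx.1, hx'.2]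
  fin_cases i <;>
    simp only [fiveColorArc, measure_union hdisj measurableSet_Ioo, Real.volume_Ioo] <;> norm_num
  rw [← ENNReal.ofReal_add] <;> norm_num

lemma fiveColorArc_mem_pair (α : ℝ) :
    ∃ i j : Fin 5, ∀ l, α ∈ fiveColorArc l → l = i ∨ l = j := by
  have h : α < 1/2 ∨ α ∈ Ico (1/2) 1 ∨ α ∈ Ico 1 (3/2) ∨ α ∈ Ico (3/2) 2 ∨ 2 ≤ α := by
    simp only [mem_Ico]; grind
  rcases h with h | h | h | h | h
    <;> [refine ⟨0, 2, ?_⟩; refine ⟨0, 3, ?_⟩; refine ⟨1, 3, ?_⟩; refine ⟨1, 4, ?_⟩;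
      refine ⟨2, 4, ?_⟩]
    <;> intro l hl
    <;> fin_cases l <;> simp only [fiveColorArc, mem_Ioo, mem_union, mem_Ico] at hl h <;> grind

theorem stmt2_general (G : SimpleGraph V) (c : V → Fin 5)
    (hacyclic : ∀ i j : Fin 5, (G.induce {v | c v = i ∨ c v = j}).IsAcyclic) :
    fva G ≤ 5 / 2 :=
  fva_le_of_hasFracArb (by norm_num) <|
    hasFracArb_of_coloring c hacyclic fiveColorArc measurableSet_fiveColorArc
      fiveColorArc_subset volume_fiveColorArc fiveColorArc_mem_pair

/-- A graph with an acyclic 5-coloring has fractional vertex-arboricity at most `5/2`. -/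
theorem stmt2 (G : SimpleGraph V) (c : V → Fin 5)
    (hproper : ∀ u v, G.Adj u v → c u ≠ c v)
    (hacyclic : ∀ i j : Fin 5, (G.induce {v | c v = i ∨ c v = j}).IsAcyclic) :
    fva G ≤ 5 / 2 :=
  stmt2_general G c hacyclic
end

section
/- If G is a vertex-transitive graph, then the fractional vertex-arboricity of G equals |V(G)| divided by the size of a largest induced forest in G. -/
/-!
If `φ` is a fractional `k`-arborization, every level set `{v | α ∈ φ v}` is an induced forest,
so it has at most `a(G)` vertices; integrating its size over `α ∈ (0, k)` gives `|V| ≤ a(G) k`.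
Conversely, let `S` be a largest induced forest. By transitivity the images `σ S`, over all
automorphisms `σ`, cover every vertex the same number `t` of times, and `|Aut G| |S| = |V| t`.
Giving each image its own interval of length `1 / t` yields a fractional arborization with
`k = |Aut G| / t = |V| / a(G)`.
-/

open MeasureTheory

variable {V : Type*}

open Finset
open scoped ENNReal Classical

namespace SimpleGraph

variable {W : Type*} {G : SimpleGraph V} {s t : Set V}

theorem IsAcyclic.induce_of_subset (h : (G.induce t).IsAcyclic) (hst : s ⊆ t) :
    (G.induce s).IsAcyclic :=
  h.embedding (G.induceHomOfLE hst)

theorem IsAcyclic.induce_image {G' : SimpleGraph W} (h : (G.induce s).IsAcyclic) (σ : G ≃g G') :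
    (G'.induce (σ '' s)).IsAcyclic := by
  refine h.comap (induceHom σ.symm.toHom ?_) (induceHom_injective _ _ σ.symm.injective.injOn)
  rintro _ ⟨x, hx, rfl⟩
  simpa using hx

end SimpleGraph

theorem MeasureTheory.sum_measure_le_mul_measure_iUnion {α ι : Type*} [MeasurableSpace α]
    (μ : Measure α) [Fintype ι] {s : ι → Set α} (hs : ∀ i, MeasurableSet (s i)) {a : ℕ}
    (hbd : ∀ x, #{i | x ∈ s i} ≤ a) :
    ∑ i, μ (s i) ≤ a * μ (⋃ i, s i) := by
  calc ∑ i, μ (s i) = ∫⁻ x, ∑ i, (s i).indicator 1 x ∂μ := by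
        rw [lintegral_finsetSum _ fun i _ => measurable_one.indicator (hs i)]
        simp [lintegral_indicator_one (hs _)]
    _ ≤ ∫⁻ x, (⋃ i, s i).indicator (fun _ => (a : ℝ≥0∞)) x ∂μ := by
        refine lintegral_mono fun x => ?_
        by_cases hx : x ∈ ⋃ i, s i
        · simpa [Set.indicator_apply, hx] using hbd x
        · simp_all
    _ = a * μ (⋃ i, s i) := lintegral_indicator_const (MeasurableSet.iUnion hs) _

theorem eq_of_mem_Ioo_div_of_mem_Ioo_div {t x : ℝ} (ht : 0 < t) {p q : ℕ}
    (hp : x ∈ Set.Ioo (p / t) ((p + 1) / t)) (hq : x ∈ Set.Ioo (q / t) ((q + 1) / t)) :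
    p = q := by
  simp only [Set.mem_Ioo, div_lt_iff₀ ht, lt_div_iff₀ ht] at hp hq
  have hpq : (p : ℝ) < q + 1 := by linarith
  have hqp : (q : ℝ) < p + 1 := by linarith
  norm_cast at hpq hqp
  omega

/-- Give the `i`-th member of the cover the `i`-th slot of length `1 / t` in `(0, |ι| / t)`;
a vertex then collects exactly `t` slots, and a point of a slot sees only that slot's forest. -/
theorem hasFracArb_of_uniform_forest_cover {ι : Type*} [Fintype ι] {G : SimpleGraph V}
    (S : ι → Set V) (hS : ∀ i, (G.induce (S i)).IsAcyclic) {t : ℕ} (ht : 0 < t)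
    (hcover : ∀ v, #{i | v ∈ S i} = t) :
    HasFracArb G (Fintype.card ι / t) := by
  have ht' : (0 : ℝ) < t := by exact_mod_cast ht
  set e := Fintype.equivFin ι
  set slot : ι → Set ℝ := fun i => Set.Ioo ((e i : ℕ) / t) (((e i : ℕ) + 1) / t) with hslot
  have slot_eq {i j : ι} {x : ℝ} (hi : x ∈ slot i) (hj : x ∈ slot j) : i = j :=
    e.injective (Fin.ext (eq_of_mem_Ioo_div_of_mem_Ioo_div ht' hi hj))
  have slot_disjoint : Pairwise (Function.onFun Disjoint slot) := fun i j hij =>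
    Set.disjoint_left.2 fun x hi hj => hij (slot_eq hi hj)
  have volume_slot (i : ι) : volume (slot i) = (t : ℝ≥0∞)⁻¹ := by
    rw [hslot, Real.volume_Ioo, ← sub_div, add_sub_cancel_left, one_div,
      ENNReal.ofReal_inv_of_pos ht', ENNReal.ofReal_natCast]
  refine ⟨fun v => ⋃ i ∈ ({i | v ∈ S i} : Finset ι), slot i, fun v => ?_, fun v => ?_,
    fun v => ?_, fun x => ?_⟩
  · exact Finset.measurableSet_biUnion _ fun i _ => measurableSet_Ioo
  · refine Set.iUnion₂_subset fun i _ => Set.Ioo_subset_Ioo (by positivity) ?_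
    gcongr
    exact_mod_cast (e i).isLt
  · rw [measure_biUnion_finset (slot_disjoint.set_pairwise _) fun i _ => measurableSet_Ioo]
    simp only [volume_slot, sum_const, hcover v, nsmul_eq_mul]
    exact ENNReal.mul_inv_cancel (by exact_mod_cast ht.ne') (ENNReal.natCast_ne_top t)
  · rcases Set.eq_empty_or_nonempty {v | x ∈ ⋃ i ∈ ({i | v ∈ S i} : Finset ι), slot i}
      with hempty | ⟨v, hv⟩
    · rw [hempty]
      exact SimpleGraph.IsAcyclic.of_subsingleton
    · obtain ⟨i, -, hi⟩ := Set.mem_iUnion₂.1 hv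
      refine (hS i).induce_of_subset fun w hw => ?_
      obtain ⟨j, hj, hj'⟩ := Set.mem_iUnion₂.1 hw
      rw [slot_eq hi hj']
      simpa using hj

section maxIndForest

variable (G : SimpleGraph V) [Fintype V]

theorem bddAbove_card_isAcyclic_induce :
    BddAbove {n : ℕ | ∃ S : Finset V, (G.induce (S : Set V)).IsAcyclic ∧ S.card = n} :=
  ⟨Fintype.card V, by rintro _ ⟨S, -, rfl⟩; exact S.card_le_univ⟩

theorem card_le_maxIndForest {S : Finset V} (hS : (G.induce (S : Set V)).IsAcyclic) :
    S.card ≤ maxIndForest G :=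
  le_csSup (bddAbove_card_isAcyclic_induce G) ⟨S, hS, rfl⟩

theorem exists_isAcyclic_card_eq_maxIndForest :
    ∃ S : Finset V, (G.induce (S : Set V)).IsAcyclic ∧ S.card = maxIndForest G :=
  Nat.sSup_mem ⟨0, by exact ⟨∅, by rw [coe_empty]; exact .of_subsingleton, rfl⟩⟩
    (bddAbove_card_isAcyclic_induce G)

theorem maxIndForest_pos [Nonempty V] : 0 < maxIndForest G := by
  obtain ⟨v⟩ := ‹Nonempty V›
  refine lt_of_lt_of_le Nat.one_pos (card_le_maxIndForest G (S := {v}) ?_)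
  rw [Finset.coe_singleton]
  exact SimpleGraph.IsAcyclic.of_subsingleton

theorem card_le_maxIndForest_mul_of_hasFracArb {k : ℝ} (hk : 0 < k) (h : HasFracArb G k) :
    (Fintype.card V : ℝ) ≤ maxIndForest G * k := by
  obtain ⟨φ, hmeas, hsub, hvol, hforest⟩ := h
  have hbd (x : ℝ) : #{v | x ∈ φ v} ≤ maxIndForest G :=
    card_le_maxIndForest G (by rw [coe_filter_univ]; exact hforest x)
  have key : (Fintype.card V : ℝ≥0∞) ≤ maxIndForest G * ENNReal.ofReal k :=
    calc (Fintype.card V : ℝ≥0∞) = ∑ v, volume (φ v) := by simp [hvol]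
      _ ≤ maxIndForest G * volume (⋃ v, φ v) := sum_measure_le_mul_measure_iUnion _ hmeas hbd
      _ ≤ maxIndForest G * volume (Set.Ioo 0 k) := by gcongr; exact Set.iUnion_subset hsub
      _ = maxIndForest G * ENNReal.ofReal k := by rw [Real.volume_Ioo, sub_zero]
  rwa [← ENNReal.ofReal_natCast, ← ENNReal.ofReal_natCast,
    ← ENNReal.ofReal_mul (by positivity), ENNReal.ofReal_le_ofReal_iff (by positivity)] at key

end maxIndForest

section VertexTransitive

variable {G : SimpleGraph V}

instance [Finite V] : Finite (G ≃g G) :=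
  .of_injective _ RelIso.toEquiv_injective

theorem card_filter_mem_image_eq_of_transitive [Fintype (G ≃g G)]
    (htrans : ∀ u v : V, ∃ g : G ≃g G, g u = v) (S : Set V) (u v : V) :
    #{σ : G ≃g G | u ∈ σ '' S} = #{σ : G ≃g G | v ∈ σ '' S} := by
  obtain ⟨g, rfl⟩ := htrans u v
  refine card_equiv (Equiv.mulLeft g) fun σ => ?_
  simp [RelIso.coe_mul]

theorem sum_card_filter_mem_image [Fintype V] [Fintype (G ≃g G)] (S : Finset V) :
    ∑ v, #{σ : G ≃g G | v ∈ σ '' S} = Fintype.card (G ≃g G) * #S := by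
  have := sum_card_bipartiteAbove_eq_sum_card_bipartiteBelow
    (fun (σ : G ≃g G) (v : V) => v ∈ σ '' S) (s := univ) (t := univ)
  simp only [bipartiteAbove, bipartiteBelow] at this
  rw [← this, ← card_univ, ← smul_eq_mul, ← sum_const]
  refine sum_congr rfl fun σ _ => ?_
  rw [← Finset.card_image_of_injective S σ.injective]
  congr 1
  ext
  simp

theorem hasFracArb_of_transitive [Fintype V] (htrans : ∀ u v : V, ∃ g : G ≃g G, g u = v)
    {S : Finset V} (hS : (G.induce (S : Set V)).IsAcyclic) (hSne : S.Nonempty) :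
    HasFracArb G (Fintype.card V / #S) := by
  have := Fintype.ofFinite (G ≃g G)
  obtain ⟨v₀, -⟩ := id hSne
  set t := #{σ : G ≃g G | v₀ ∈ σ '' S}
  have hcover (v : V) : #{σ : G ≃g G | v ∈ σ '' S} = t :=
    card_filter_mem_image_eq_of_transitive htrans _ v v₀
  have hcount : Fintype.card V * t = Fintype.card (G ≃g G) * #S := by
    rw [← sum_card_filter_mem_image, Finset.sum_congr rfl fun v _ => hcover v, sum_const,
      card_univ, smul_eq_mul]
  have ht : 0 < t := by
    have : 0 < Fintype.card V * t := hcount ▸ Nat.mul_pos Fintype.card_pos (card_pos.2 hSne)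
    exact Nat.pos_of_mul_pos_left this
  convert hasFracArb_of_uniform_forest_cover (fun σ : G ≃g G => σ '' S)
    (fun σ => hS.induce_image σ) ht hcover using 1
  rw [div_eq_div_iff (by simpa using hSne.ne_empty) (by positivity)]
  exact_mod_cast hcount

end VertexTransitive

theorem hasFracArb_of_isEmpty [IsEmpty V] (G : SimpleGraph V) (k : ℝ) : HasFracArb G k :=
  ⟨isEmptyElim, isEmptyElim, isEmptyElim, isEmptyElim, fun _ => .of_subsingleton⟩

/-- If `G` is vertex-transitive then `fva(G) = |V(G)| / a(G)`. -/
theorem stmt3 (G : SimpleGraph V) [Fintype V]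
    (htrans : ∀ u v : V, ∃ g : G ≃g G, g u = v) :
    fva G = (Fintype.card V : ℝ) / (maxIndForest G : ℝ) := by
  rcases isEmpty_or_nonempty V with hV | hV
  · have : {k : ℝ | 0 < k ∧ HasFracArb G k} = Set.Ioi 0 := by
      ext k
      simp [hasFracArb_of_isEmpty]
    simp [fva, this]
  obtain ⟨S, hS, hcard⟩ := exists_isAcyclic_card_eq_maxIndForest G
  have ha := maxIndForest_pos G
  refine IsLeast.csInf_eq ⟨⟨by positivity, ?_⟩, fun k ⟨hk, hfrac⟩ => ?_⟩
  · rw [← hcard]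
    exact hasFracArb_of_transitive htrans hS (card_pos.1 (hcard ▸ ha))
  · rw [div_le_iff₀ (by positivity), mul_comm]
    exact card_le_maxIndForest_mul_of_hasFracArb G hk hfrac
end

section
/- Every graph with average degree less than 10/3 contains a vertex of degree at most one, or a pair of adjacent vertices of degree two, or a vertex with effective degree at most two and degree between three and nine, or a vertex of degree three with at least two light neighbors. -/
open MeasureTheory

variable {V : Type*}

/-!
Discharging. Every vertex starts with charge equal to its degree, so the total charge is
`2|E| < 10/3 |V|`. A vertex of degree at least three sends `2/3` to each neighbour of degree two,
and a heavy vertex sends `1/6` to each neighbour of degree three. If none of the four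
configurations occurs, every vertex ends with charge at least `10/3`, a contradiction:
degree-two vertices have two neighbours of degree at least three, degree-three vertices are light
and have two heavy neighbours, and a vertex of degree `d ≥ 4` and effective degree `e` keeps at
least `d - 2/3 (d - e) - e/6 = d/3 + e/2`, while `e = 3` when it is light.
-/

namespace Discharge

open Finset SimpleGraph

variable [Fintype V] (G : SimpleGraph V) [DecidableRel G.Adj]

theorem sum_sum_neighborFinset_comm {M : Type*} [AddCommMonoid M] (f : V → V → M) :
    ∑ v, ∑ u ∈ G.neighborFinset v, f v u = ∑ v, ∑ u ∈ G.neighborFinset v, f u v := by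
  simp only [neighborFinset_eq_filter, sum_filter]
  rw [sum_comm]
  simp only [G.adj_comm]

noncomputable def charge (f : V → V → ℝ) (v : V) : ℝ :=
  G.degree v - ∑ u ∈ G.neighborFinset v, f v u + ∑ u ∈ G.neighborFinset v, f u v

theorem sum_charge [DecidableEq V] (f : V → V → ℝ) :
    ∑ v, charge G f v = 2 * #G.edgeFinset := by
  simp only [charge, sum_add_distrib, sum_sub_distrib, sum_sum_neighborFinset_comm G f,
    sub_add_cancel]
  exact_mod_cast G.sum_degrees_eq_twice_card_edges

theorem mul_card_le_of_le_charge [DecidableEq V] (f : V → V → ℝ) {c : ℝ}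
    (h : ∀ v, c ≤ charge G f v) : c * Fintype.card V ≤ 2 * #G.edgeFinset := by
  calc c * Fintype.card V = ∑ _v : V, c := by simp [mul_comm]
    _ ≤ ∑ v, charge G f v := sum_le_sum fun v _ => h v
    _ = 2 * #G.edgeFinset := sum_charge G f

noncomputable def send (v u : V) : ℝ :=
  if G.degree u = 2 ∧ 3 ≤ G.degree v then 2 / 3
  else if G.degree u = 3 ∧ ¬ Light G v then 1 / 6 else 0

theorem send_nonneg (v u : V) : 0 ≤ send G v u := by
  unfold send; split_ifs <;> norm_num

theorem effDeg_le_degree (v : V) : effDeg G v ≤ G.degree v :=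
  (card_filter_le _ _).trans_eq (G.card_neighborFinset_eq_degree v)

theorem light_of_degree_le_three {v : V} (hv : G.degree v ≤ 3) : Light G v :=
  ⟨(effDeg_le_degree G v).trans hv, by omega⟩

theorem sum_send_le (v : V) :
    ∑ u ∈ G.neighborFinset v, send G v u ≤
      2 / 3 * (G.degree v - effDeg G v : ℝ) + (if Light G v then 0 else 1 / 6) * effDeg G v := by
  have hsplit := sum_filter_add_sum_filter_not (G.neighborFinset v) (fun u => 3 ≤ G.degree u)
    (send G v)
  have hcard := card_filter_add_card_filter_not (s := G.neighborFinset v)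
    (fun u => 3 ≤ G.degree u)
  rw [card_neighborFinset_eq_degree] at hcard
  have hlow : ∑ u ∈ G.neighborFinset v with ¬ 3 ≤ G.degree u, send G v u ≤
      #{u ∈ G.neighborFinset v | ¬ 3 ≤ G.degree u} * (2 / 3 : ℝ) := by
    rw [← nsmul_eq_mul]
    refine sum_le_card_nsmul _ _ _ fun u _ => ?_
    unfold send; split_ifs <;> norm_num
  have hhigh : ∑ u ∈ G.neighborFinset v with 3 ≤ G.degree u, send G v u ≤
      effDeg G v * (if Light G v then 0 else 1 / 6 : ℝ) := by
    rw [← nsmul_eq_mul]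
    refine sum_le_card_nsmul _ _ _ fun u hu => ?_
    have hu3 : 3 ≤ G.degree u := (mem_filter.1 hu).2
    unfold send
    rw [if_neg (by omega)]
    split_ifs <;> simp_all
  have hcard' :
      (#{u ∈ G.neighborFinset v | ¬ 3 ≤ G.degree u} : ℝ) = G.degree v - effDeg G v := by
    rw [← hcard, effDeg]; push_cast; ring
  rw [← hcard']
  linarith

structure AvoidsConfigurations (G : SimpleGraph V) [DecidableRel G.Adj] : Prop where
  two_le_degree : ∀ v, 2 ≤ G.degree v
  degree_ne_two : ∀ v w, G.Adj v w → G.degree v = 2 → G.degree w ≠ 2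
  three_le_effDeg : ∀ v, 3 ≤ G.degree v → G.degree v ≤ 9 → 3 ≤ effDeg G v
  card_light_le_one : ∀ v, G.degree v = 3 → #{u ∈ G.neighborFinset v | Light G u} ≤ 1

namespace AvoidsConfigurations

variable {G} (hG : AvoidsConfigurations G)
include hG

theorem three_le_degree_of_adj {v u : V} (hv : G.degree v = 2) (hu : G.Adj v u) :
    3 ≤ G.degree u := by
  have := hG.two_le_degree u
  have := hG.degree_ne_two v u hu hv
  omega

theorem effDeg_eq_of_degree_eq_two {v : V} (hv : G.degree v = 2) : effDeg G v = 2 := by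
  rw [effDeg, filter_true_of_mem fun u hu =>
    hG.three_le_degree_of_adj hv ((G.mem_neighborFinset v u).1 hu),
    card_neighborFinset_eq_degree, hv]

theorem effDeg_eq_of_degree_eq_three {v : V} (hv : G.degree v = 3) : effDeg G v = 3 :=
  le_antisymm ((effDeg_le_degree G v).trans_eq hv) (hG.three_le_effDeg v hv.ge (by omega))

theorem sum_send_to_of_degree_eq_two {v : V} (hv : G.degree v = 2) :
    ∑ u ∈ G.neighborFinset v, send G u v = 4 / 3 := by
  have hsend : ∀ u ∈ G.neighborFinset v, send G u v = 2 / 3 := fun u hu =>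
    if_pos ⟨hv, hG.three_le_degree_of_adj hv ((G.mem_neighborFinset v u).1 hu)⟩
  rw [sum_congr rfl hsend, sum_const, card_neighborFinset_eq_degree, hv]
  norm_num

theorem sum_send_to_of_degree_eq_three {v : V} (hv : G.degree v = 3) :
    1 / 3 ≤ ∑ u ∈ G.neighborFinset v, send G u v := by
  have hheavy : 2 ≤ #{u ∈ G.neighborFinset v | ¬ Light G u} := by
    have := card_filter_add_card_filter_not (s := G.neighborFinset v) (fun u => Light G u)
    have := hG.card_light_le_one v hv
    rw [card_neighborFinset_eq_degree] at *
    omega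
  have hsend : ∑ u ∈ G.neighborFinset v with ¬ Light G u, send G u v =
      #{u ∈ G.neighborFinset v | ¬ Light G u} * (1 / 6 : ℝ) := by
    rw [sum_congr rfl fun u hu => ?_, sum_const, nsmul_eq_mul]
    unfold send
    rw [if_neg (by omega), if_pos ⟨hv, (mem_filter.1 hu).2⟩]
  calc (1 / 3 : ℝ) ≤ #{u ∈ G.neighborFinset v | ¬ Light G u} * (1 / 6 : ℝ) := by
        have : (2 : ℝ) ≤ #{u ∈ G.neighborFinset v | ¬ Light G u} := by exact_mod_cast hheavy
        linarith
    _ = ∑ u ∈ G.neighborFinset v with ¬ Light G u, send G u v := hsend.symm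
    _ ≤ ∑ u ∈ G.neighborFinset v, send G u v :=
        sum_le_sum_of_subset_of_nonneg (filter_subset _ _) fun u _ _ => send_nonneg G u v

theorem effDeg_eq_three_of_light {v : V} (hd : 3 ≤ G.degree v) (hv : Light G v) :
    effDeg G v = 3 :=
  le_antisymm hv.1 (hG.three_le_effDeg v hd (by have := hv.2; omega))

theorem twenty_le_of_not_light {v : V} (hd : 3 ≤ G.degree v) (hv : ¬ Light G v) :
    20 ≤ 2 * G.degree v + 3 * effDeg G v := by
  unfold Light at hv
  rcases le_or_gt (G.degree v) 9 with hd9 | hd9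
  · have := hG.three_le_effDeg v hd hd9
    have := effDeg_le_degree G v
    omega
  · omega

theorem ten_thirds_le_charge (v : V) : 10 / 3 ≤ charge G (send G) v := by
  have hout := sum_send_le G v
  have hin : 0 ≤ ∑ u ∈ G.neighborFinset v, send G u v :=
    sum_nonneg fun u _ => send_nonneg G u v
  unfold charge
  obtain hd2 | hd3 | hd4 : G.degree v = 2 ∨ G.degree v = 3 ∨ 4 ≤ G.degree v := by
    have := hG.two_le_degree v; omega
  · rw [if_pos (light_of_degree_le_three G (by omega)), hG.effDeg_eq_of_degree_eq_two hd2,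
      hd2] at hout
    rw [hG.sum_send_to_of_degree_eq_two hd2, hd2]
    norm_num at hout ⊢
    linarith
  · rw [if_pos (light_of_degree_le_three G hd3.le), hG.effDeg_eq_of_degree_eq_three hd3,
      hd3] at hout
    have := hG.sum_send_to_of_degree_eq_three hd3
    rw [hd3]
    norm_num at hout ⊢
    linarith
  · have hdR : (4 : ℝ) ≤ G.degree v := by exact_mod_cast hd4
    by_cases hlight : Light G v
    · rw [if_pos hlight, hG.effDeg_eq_three_of_light (by omega) hlight] at hout
      push_cast at hout
      linarith
    · rw [if_neg hlight] at hout
      have : (20 : ℝ) ≤ 2 * G.degree v + 3 * effDeg G v := by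
        exact_mod_cast hG.twenty_le_of_not_light (by omega) hlight
      linarith

end AvoidsConfigurations

end Discharge

open Discharge in
/-- Discharging lemma: a graph with average degree less than `10/3` contains a vertex of
degree at most one, a pair of adjacent degree-two vertices, a vertex of effective degree at
most two and degree between three and nine, or a degree-three vertex with at least two light
neighbors. -/
theorem stmt4 (G : SimpleGraph V) [Fintype V] [DecidableEq V] [DecidableRel G.Adj]
    (havg : (2 * G.edgeFinset.card : ℝ) < 10 / 3 * (Fintype.card V : ℝ)) :
    (∃ v, G.degree v ≤ 1) ∨
    (∃ v w, G.Adj v w ∧ G.degree v = 2 ∧ G.degree w = 2) ∨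
    (∃ v, effDeg G v ≤ 2 ∧ 3 ≤ G.degree v ∧ G.degree v ≤ 9) ∨
    (∃ v, G.degree v = 3 ∧ 2 ≤ ((G.neighborFinset v).filter fun u => Light G u).card) := by
  by_contra hcon
  simp only [not_or, not_exists, not_and, not_le] at hcon
  obtain ⟨hdeg, hpair, heff, hlight⟩ := hcon
  have hG : AvoidsConfigurations G :=
    { two_le_degree := hdeg
      degree_ne_two := hpair
      three_le_effDeg := fun v h3 h9 => by
        by_contra h
        have := heff v (by omega) h3
        omega
      card_light_le_one := fun v hv => Nat.le_of_lt_succ (hlight v hv) }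
  have := mul_card_le_of_le_charge G (send G) hG.ten_thirds_le_charge
  linarith
end

section
/- Let G be a graph with a fractional offshoot-assignment (L,o), and for every pair of disjoint subsets X, O of V(G) let f_{X,O} be a demand function for G − X. If G − X has a fractional f_{X,O}-arborization respecting O for every such pair, and for every vertex v the sum over all pairs (X,O) with v ∉ X of f_{X,O}(v) times the measure of C_{X,O} is at least 1, where C_{X,O} = ((⋂_{u∉X} L(u)∖o(u)) ∩ (⋂_{u∈O} o(u))) ∖ (⋃_{u∈X} L(u)), then G has a fractional (L,o)-arborization. -/
/-! Only the pieces `C_{X,∅}` carry measure: for nonempty `O` disjoint from `X`, a point of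
`C_{X,O}` would have to lie both inside and outside `o u` for `u ∈ O`. The pieces `C_{X,∅}` are
pairwise disjoint, because `X` is recovered from any of their points `α` as the set of `u` with
`α ∉ L u`. Rescale each `C_{X,∅}` onto `[0,1]` by the distribution function of Lebesgue measure
on it (the probability integral transform), and let `v` take the colour `α ∈ C_{X,∅}` exactly when
the rescaled point lies in `φ_X(v)`, where `φ_X` is the given arborization of `G - X`. Every level
set is then a level set of a single `φ_X`, hence a forest; `v` receives measure at least
`∑_X f_{X,∅}(v) μ(C_{X,∅}) ≥ 1`; and every colour of `v` avoids `o(v)`, so the offshoot condition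
holds trivially. -/

open MeasureTheory

variable {V : Type*}

/-- The set `C_{X,O}` from Proposition 2.5. -/
def Cset [Fintype V] [DecidableEq V] (L o : V → Set ℝ) (X O : Finset V) : Set ℝ :=
  ((⋂ u ∈ (Xᶜ : Finset V), (L u \ o u)) ∩ ⋂ u ∈ O, o u) \ ⋃ u ∈ X, L u

open Set Function

namespace ProbabilityTheory

variable (μ : Measure ℝ) [IsProbabilityMeasure μ] [NullSingletonClass μ]

lemma continuous_cdf : Continuous (cdf μ) := by
  refine continuous_iff_continuousAt.2 fun x => ?_
  rw [(cdf μ).mono.continuousAt_iff_leftLim_eq_rightLim, (cdf μ).rightLim_eq]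
  have h := (cdf μ).measure_singleton x
  rw [measure_cdf, measure_singleton, eq_comm, ENNReal.ofReal_eq_zero, sub_nonpos] at h
  exact le_antisymm ((cdf μ).mono.leftLim_le le_rfl) h

lemma exists_cdf_eq {y : ℝ} (hy : y ∈ Ioo 0 1) : ∃ t, cdf μ t = y :=
  mem_range_of_exists_le_of_exists_ge (continuous_cdf μ)
    ((tendsto_cdf_atBot μ).eventually (eventually_le_nhds hy.1)).exists
    ((tendsto_cdf_atTop μ).eventually (eventually_ge_nhds hy.2)).exists

lemma ofReal_le_measure_cdf_le {y : ℝ} (hy : y ≤ 1) :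
    ENNReal.ofReal y ≤ μ {x | cdf μ x ≤ y} := by
  rcases le_or_gt y 0 with hy0 | hy0
  · simp [ENNReal.ofReal_of_nonpos hy0]
  rcases hy.lt_or_eq with hy1 | rfl
  · obtain ⟨t, rfl⟩ := exists_cdf_eq μ ⟨hy0, hy1⟩
    rw [ofReal_cdf]
    exact measure_mono fun x hx => (cdf μ).mono hx
  · simp [cdf_le_one]

lemma measure_cdf_lt_le_ofReal (y : ℝ) : μ {x | cdf μ x < y} ≤ ENNReal.ofReal y := by
  rcases le_or_gt y 0 with hy0 | hy0
  · have : {x | cdf μ x < y} = ∅ :=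
      eq_empty_of_forall_notMem fun x hx => (hx.trans_le hy0).not_ge (cdf_nonneg μ x)
    simp [this]
  rcases lt_or_ge y 1 with hy1 | hy1
  · obtain ⟨t, rfl⟩ := exists_cdf_eq μ ⟨hy0, hy1⟩
    refine (measure_mono fun x hx => ?_).trans_eq (ofReal_cdf μ t).symm
    exact le_of_not_gt fun htx => (not_lt.2 ((cdf μ).mono htx.le)) hx
  · exact prob_le_one.trans (ENNReal.one_le_ofReal.2 hy1)

lemma measure_cdf_le {y : ℝ} (hy : y ≤ 1) : μ {x | cdf μ x ≤ y} = ENNReal.ofReal y := by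
  refine le_antisymm (ENNReal.le_of_forall_pos_le_add fun ε hε _ => ?_)
    (ofReal_le_measure_cdf_le μ hy)
  calc μ {x | cdf μ x ≤ y} ≤ μ {x | cdf μ x < y + ε} :=
        measure_mono fun x (hx : cdf μ x ≤ y) => lt_add_of_le_of_pos hx (by exact_mod_cast hε)
    _ ≤ ENNReal.ofReal (y + ε) := measure_cdf_lt_le_ofReal μ _
    _ ≤ ENNReal.ofReal y + ε := ENNReal.ofReal_add_le.trans_eq (by rw [ENNReal.ofReal_coe_nnreal])

theorem map_cdf : μ.map (cdf μ) = volume.restrict (Icc 0 1) := by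
  refine Measure.ext_of_Iic _ _ fun y => ?_
  have hpre : cdf μ ⁻¹' Iic y = {x | cdf μ x ≤ min y 1} := by
    ext x; simp [cdf_le_one]
  have hIcc : Iic y ∩ Icc 0 1 = Icc 0 (min y 1) := by
    ext x; simp [and_left_comm]
  rw [Measure.map_apply (cdf μ).mono.measurable measurableSet_Iic,
    Measure.restrict_apply measurableSet_Iic, hpre, measure_cdf_le μ (min_le_right y 1), hIcc,
    Real.volume_Icc, sub_zero]

end ProbabilityTheory

namespace MeasureTheory

theorem exists_measurable_map_eq_smul_volume_Icc (μ : Measure ℝ) [IsFiniteMeasure μ]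
    [NullSingletonClass μ] :
    ∃ g : ℝ → ℝ, Measurable g ∧ μ.map g = μ univ • volume.restrict (Icc 0 1) := by
  rcases eq_zero_or_neZero μ with rfl | hμ
  · exact ⟨id, measurable_id, by simp⟩
  set ν := (μ univ)⁻¹ • μ
  have : NullSingletonClass ν := ⟨fun x => by simp [ν]⟩
  refine ⟨ProbabilityTheory.cdf ν, (ProbabilityTheory.cdf ν).mono.measurable, ?_⟩
  have hμν : μ = μ univ • ν := by
    simp [ν, smul_smul, ENNReal.mul_inv_cancel (NeZero.ne (μ univ)) (measure_ne_top μ univ)]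
  conv_lhs => rw [hμν]
  rw [Measure.map_smul, ProbabilityTheory.map_cdf]

end MeasureTheory

section PiecewisePullback

variable {ι α β : Type*} {C : ι → Set α} {g : ι → α → β} {ψ : ι → V → Set β}

def piecewisePullback (C : ι → Set α) (g : ι → α → β) (ψ : ι → V → Set β) (v : V) : Set α :=
  ⋃ i, C i ∩ g i ⁻¹' ψ i v

lemma mem_piecewisePullback {a : α} {v : V} :
    a ∈ piecewisePullback C g ψ v ↔ ∃ i, a ∈ C i ∧ g i a ∈ ψ i v := by
  simp [piecewisePullback]

lemma setOf_mem_piecewisePullback (hC : Pairwise (Disjoint on C)) {i : ι} {a : α}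
    (ha : a ∈ C i) : {v | a ∈ piecewisePullback C g ψ v} = {v | g i a ∈ ψ i v} := by
  ext v
  simp only [mem_ofPred_eq, mem_piecewisePullback]
  refine ⟨fun ⟨j, hj, hv⟩ => ?_, fun hv => ⟨i, ha, hv⟩⟩
  obtain rfl : j = i := hC.eq (not_disjoint_iff.2 ⟨a, hj, ha⟩)
  exact hv

lemma isAcyclic_induce_piecewisePullback (G : SimpleGraph V) (hC : Pairwise (Disjoint on C))
    (hψ : ∀ i b, (G.induce {v | b ∈ ψ i v}).IsAcyclic) (a : α) :
    (G.induce {v | a ∈ piecewisePullback C g ψ v}).IsAcyclic := by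
  by_cases ha : ∃ i, a ∈ C i
  · obtain ⟨i, hi⟩ := ha
    rw [setOf_mem_piecewisePullback hC hi]
    exact hψ i _
  · have : IsEmpty {v | a ∈ piecewisePullback C g ψ v} :=
      ⟨fun ⟨_, hv⟩ => ha ((mem_piecewisePullback.1 hv).imp fun _ => And.left)⟩
    exact .of_subsingleton

variable [MeasurableSpace α] [MeasurableSpace β] [Countable ι]

lemma measurableSet_piecewisePullback (hC : ∀ i, MeasurableSet (C i))
    (hg : ∀ i, Measurable (g i)) {v : V} (hψ : ∀ i, MeasurableSet (ψ i v)) :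
    MeasurableSet (piecewisePullback C g ψ v) :=
  .iUnion fun i => (hC i).inter (hg i (hψ i))

lemma measure_piecewisePullback (μ : Measure α) (hC : Pairwise (Disjoint on C))
    (hCm : ∀ i, MeasurableSet (C i)) (hg : ∀ i, Measurable (g i)) {v : V}
    (hψ : ∀ i, MeasurableSet (ψ i v)) :
    μ (piecewisePullback C g ψ v) = ∑' i, μ (C i ∩ g i ⁻¹' ψ i v) :=
  measure_iUnion (fun _ _ hij => (hC hij).mono inter_subset_left inter_subset_left)
    fun i => (hCm i).inter (hg i (hψ i))

lemma ofReal_sum_le_measure_piecewisePullback [Fintype ι] (μ : Measure α)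
    (hC : Pairwise (Disjoint on C)) (hCm : ∀ i, MeasurableSet (C i)) (hg : ∀ i, Measurable (g i))
    {v : V} (hψ : ∀ i, MeasurableSet (ψ i v)) {w : ι → ℝ} (hw0 : ∀ i, 0 ≤ w i)
    (hw : ∀ i, ENNReal.ofReal (w i) ≤ μ (C i ∩ g i ⁻¹' ψ i v)) :
    ENNReal.ofReal (∑ i, w i) ≤ μ (piecewisePullback C g ψ v) := by
  rw [measure_piecewisePullback μ hC hCm hg hψ, tsum_fintype,
    ENNReal.ofReal_sum_of_nonneg fun i _ => hw0 i]
  exact Finset.sum_le_sum fun i _ => hw i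

end PiecewisePullback

lemma isAcyclic_induce_extend_val {β : Type*} (G : SimpleGraph V) {p : V → Prop}
    {φ : {v // p v} → Set β} (hφ : ∀ b, ((G.induce {v | p v}).induce {v | b ∈ φ v}).IsAcyclic)
    (b : β) : (G.induce {v | b ∈ Function.extend Subtype.val φ ⊥ v}).IsAcyclic := by
  have hp : ∀ v, b ∈ Function.extend Subtype.val φ ⊥ v → p v := fun v hv =>
    by_contra fun h => by rwa [Function.extend_val_apply' h] at hv
  let f : G.induce {v | b ∈ Function.extend Subtype.val φ ⊥ v} →g
      (G.induce {v | p v}).induce {v | b ∈ φ v} :=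
    { toFun := fun v => ⟨⟨v, hp v v.2⟩,
        show b ∈ φ _ from Function.extend_val_apply (g := φ) (j := ⊥) (hp v v.2) ▸ v.2⟩
      map_rel' := id }
  exact (hφ b).comap f fun v w h => Subtype.ext (congrArg (fun x => x.1.1) h)

section Cset

variable [Fintype V] [DecidableEq V] {L o : V → Set ℝ} {X O : Finset V} {v : V} {a : ℝ}

lemma measurableSet_Cset (hL : ∀ v, MeasurableSet (L v)) (ho : ∀ v, MeasurableSet (o v))
    (X O : Finset V) : MeasurableSet (Cset L o X O) :=
  ((MeasurableSet.iInter fun u => .iInter fun _ => (hL u).diff (ho u)).inter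
    (.iInter fun u => .iInter fun _ => ho u)).diff (.iUnion fun u => .iUnion fun _ => hL u)

lemma mem_diff_of_mem_Cset (hv : v ∉ X) (ha : a ∈ Cset L o X O) : a ∈ L v \ o v :=
  mem_iInter₂.1 ha.1.1 v (Finset.mem_compl.2 hv)

lemma notMem_of_mem_Cset (hv : v ∈ X) (ha : a ∈ Cset L o X O) : a ∉ L v :=
  fun h => ha.2 (mem_iUnion₂.2 ⟨v, hv, h⟩)

lemma eq_of_mem_Cset {Y O' : Finset V} (hX : a ∈ Cset L o X O) (hY : a ∈ Cset L o Y O') :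
    X = Y := by
  ext u
  constructor
  · exact fun hu => by_contra fun h => notMem_of_mem_Cset hu hX (mem_diff_of_mem_Cset h hY).1
  · exact fun hu => by_contra fun h => notMem_of_mem_Cset hu hY (mem_diff_of_mem_Cset h hX).1

lemma pairwise_disjoint_Cset (O : Finset V) : Pairwise (Disjoint on fun X => Cset L o X O) :=
  fun _ _ hXY => disjoint_left.2 fun _ hX hY => hXY (eq_of_mem_Cset hX hY)

lemma Cset_eq_empty (hXO : Disjoint X O) (hO : O.Nonempty) : Cset L o X O = ∅ := by
  obtain ⟨u, hu⟩ := hO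
  exact eq_empty_of_forall_notMem fun a ha =>
    (mem_diff_of_mem_Cset (Finset.disjoint_right.1 hXO hu) ha).2 (mem_iInter₂.1 ha.1.2 u hu)

lemma sum_ite_Cset (w : Finset V → ℝ) :
    ∑ O, (if v ∉ X ∧ Disjoint X O then w O * (volume (Cset L o X O)).toReal else 0) =
      if v ∉ X then w ∅ * (volume (Cset L o X ∅)).toReal else 0 := by
  rw [Finset.sum_eq_single ∅]
  · simp
  · intro O _ hO
    split_ifs with h
    · simp [Cset_eq_empty h.2 (Finset.nonempty_iff_ne_empty.2 hO)]
    · rfl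
  · simp

lemma piecewisePullback_Cset_subset {g : Finset V → ℝ → ℝ} {ψ : Finset V → V → Set ℝ}
    (hψ : ∀ X v, v ∈ X → ψ X v = ∅) (v : V) :
    piecewisePullback (fun X => Cset L o X O) g ψ v ⊆ L v \ o v := by
  intro a ha
  obtain ⟨X, haX, hv⟩ := mem_piecewisePullback.1 ha
  refine mem_diff_of_mem_Cset (fun hvX => ?_) haX
  rw [hψ X v hvX] at hv
  exact hv

end Cset

lemma exists_measurable_ofReal_mul_le_volume_inter_preimage (C : Set ℝ) :
    ∃ g : ℝ → ℝ, Measurable g ∧ ∀ ⦃A : Set ℝ⦄ ⦃w : ℝ⦄, MeasurableSet A → A ⊆ Icc 0 1 →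
      ENNReal.ofReal w ≤ volume A →
        ENNReal.ofReal (w * (volume C).toReal) ≤ volume (C ∩ g ⁻¹' A) := by
  by_cases hC : volume C = ⊤
  · exact ⟨id, measurable_id, fun A w _ _ _ => by simp [hC]⟩
  have := isFiniteMeasure_restrict.2 hC
  obtain ⟨g, hg, hmap⟩ := exists_measurable_map_eq_smul_volume_Icc (volume.restrict C)
  refine ⟨g, hg, fun A w hA hA1 hw => ?_⟩
  calc ENNReal.ofReal (w * (volume C).toReal) ≤ volume C * volume A := by
        rw [ENNReal.ofReal_mul' ENNReal.toReal_nonneg, ENNReal.ofReal_toReal hC, mul_comm]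
        gcongr
    _ = volume (C ∩ g ⁻¹' A) := by
        rw [inter_comm, ← Measure.restrict_apply (hg hA), ← Measure.map_apply hg hA, hmap,
          Measure.restrict_apply_univ, Measure.smul_apply, Measure.restrict_apply hA,
          inter_eq_left.2 hA1, smul_eq_mul]

theorem stmt12_general (G : SimpleGraph V) [Fintype V] [DecidableEq V]
    (L o : V → Set ℝ)
    (hL : ∀ v, MeasurableSet (L v)) (ho : ∀ v, MeasurableSet (o v))
    (f : Finset V → Finset V → V → ℚ)
    (hf : ∀ X O v, 0 ≤ f X O v ∧ f X O v ≤ 1)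
    (harb : ∀ X O : Finset V, Disjoint X O →
      ∃ φ : {v : V // v ∉ X} → Set ℝ,
        (∀ v, MeasurableSet (φ v) ∧ φ v ⊆ Set.Icc 0 1 ∧
          ENNReal.ofReal (f X O v.1 : ℝ) ≤ volume (φ v)) ∧
        (∀ α : ℝ, ((G.induce {v : V | v ∉ X}).induce {v | α ∈ φ v}).IsAcyclic) ∧
        (∀ x y : {v : V // v ∉ X}, x.1 ∈ O → y.1 ∈ O → x ≠ y →
          ∀ p : (G.induce {v : V | v ∉ X}).Walk x y, p.IsPath →
            ⋂ u ∈ p.support, φ u = ∅))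
    (hcov : ∀ v : V,
      1 ≤ ∑ X : Finset V, ∑ O : Finset V,
        if v ∉ X ∧ Disjoint X O then
          (f X O v : ℝ) * (volume (Cset L o X O)).toReal else 0) :
    ∃ φ : V → Set ℝ,
      (∀ v, MeasurableSet (φ v) ∧ φ v ⊆ L v ∧ 1 ≤ volume (φ v)) ∧
      (∀ α : ℝ, (G.induce {v | α ∈ φ v}).IsAcyclic) ∧
      (∀ x y : V, x ≠ y → ∀ p : G.Walk x y, p.IsPath →
        (o x ∩ o y) ∩ ⋂ u ∈ p.support, φ u = ∅) := by
  set C : Finset V → Set ℝ := fun X => Cset L o X ∅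
  have hCm (X : Finset V) : MeasurableSet (C X) := measurableSet_Cset hL ho X ∅
  choose φ hφ hφacyc _ using fun X => harb X ∅ (Finset.disjoint_empty_right X)
  choose g hg hgC using fun X => exists_measurable_ofReal_mul_le_volume_inter_preimage (C X)
  set ψ : Finset V → V → Set ℝ := fun X => Function.extend Subtype.val (φ X) ⊥
  have hψ_of_mem (X : Finset V) (v : V) (hv : v ∈ X) : ψ X v = ∅ :=
    Function.extend_val_apply' (not_not.2 hv)
  have hψ (X : Finset V) (v : V) : MeasurableSet (ψ X v) ∧ ψ X v ⊆ Icc 0 1 ∧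
      (v ∉ X → ENNReal.ofReal (f X ∅ v) ≤ volume (ψ X v)) := by
    by_cases hv : v ∈ X
    · simp [hψ_of_mem X v hv, hv]
    · obtain ⟨hm, hsub, hvol⟩ := hφ X ⟨v, hv⟩
      rw [show ψ X v = φ X ⟨v, hv⟩ from Function.extend_val_apply (p := (· ∉ X)) hv]
      exact ⟨hm, hsub, fun _ => hvol⟩
  refine ⟨piecewisePullback C g ψ, fun v => ⟨?_, ?_, ?_⟩,
    isAcyclic_induce_piecewisePullback G (pairwise_disjoint_Cset ∅)
      fun X => isAcyclic_induce_extend_val G (hφacyc X), ?_⟩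
  · exact measurableSet_piecewisePullback hCm hg fun X => (hψ X v).1
  · exact (piecewisePullback_Cset_subset hψ_of_mem v).trans sdiff_subset
  · refine le_trans (by simpa only [sum_ite_Cset, ENNReal.one_le_ofReal] using hcov v)
      (ofReal_sum_le_measure_piecewisePullback _ (pairwise_disjoint_Cset ∅) hCm hg
        (fun X => (hψ X v).1) (fun X => ?_) fun X => ?_)
    · split_ifs <;> positivity [(hf X ∅ v).1]
    · by_cases hv : v ∈ X
      · simp [hv]
      · rw [if_pos hv]
        exact hgC X (hψ X v).1 (hψ X v).2.1 ((hψ X v).2.2 hv)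
  · intro x _ _ p _
    refine eq_empty_of_forall_notMem fun a ha => ?_
    have hax : a ∈ piecewisePullback C g ψ x := mem_iInter₂.1 ha.2 x p.start_mem_support
    exact (piecewisePullback_Cset_subset hψ_of_mem x hax).2 ha.1.1

/-- Proposition 2.5: sufficient conditions for a fractional `(L, o)`-arborization. -/
theorem stmt12 (G : SimpleGraph V) [Fintype V] [DecidableEq V]
    (L o : V → Set ℝ)
    (hL : ∀ v, MeasurableSet (L v)) (ho : ∀ v, MeasurableSet (o v))
    (hoL : ∀ v, o v ⊆ L v)
    (f : Finset V → Finset V → V → ℚ)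
    (hf : ∀ X O v, 0 ≤ f X O v ∧ f X O v ≤ 1)
    (harb : ∀ X O : Finset V, Disjoint X O →
      ∃ φ : {v : V // v ∉ X} → Set ℝ,
        (∀ v, MeasurableSet (φ v) ∧ φ v ⊆ Set.Icc 0 1 ∧
          ENNReal.ofReal (f X O v.1 : ℝ) ≤ volume (φ v)) ∧
        (∀ α : ℝ, ((G.induce {v : V | v ∉ X}).induce {v | α ∈ φ v}).IsAcyclic) ∧
        (∀ x y : {v : V // v ∉ X}, x.1 ∈ O → y.1 ∈ O → x ≠ y →
          ∀ p : (G.induce {v : V | v ∉ X}).Walk x y, p.IsPath →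
            ⋂ u ∈ p.support, φ u = ∅))
    (hcov : ∀ v : V,
      1 ≤ ∑ X : Finset V, ∑ O : Finset V,
        if v ∉ X ∧ Disjoint X O then
          (f X O v : ℝ) * (volume (Cset L o X O)).toReal else 0) :
    ∃ φ : V → Set ℝ,
      (∀ v, MeasurableSet (φ v) ∧ φ v ⊆ L v ∧ 1 ≤ volume (φ v)) ∧
      (∀ α : ℝ, (G.induce {v | α ∈ φ v}).IsAcyclic) ∧
      (∀ x y : V, x ≠ y → ∀ p : G.Walk x y, p.IsPath →
        (o x ∩ o y) ∩ ⋂ u ∈ p.support, φ u = ∅) :=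
  stmt12_general G L o hL ho f hf harb hcov
end

section
/- Let G be a graph with a fractional (2−ε)-arborization φ, and let x, y be two (not necessarily adjacent) vertices of G. Then the Lebesgue measure of the union over all paths P from x to y in G of ⋂_{u∈V(P)} φ(u) is at most 1 − ε, provided there is a vertex v adjacent to both x and y with φ(v) disjoint from each such intersection. -/
open MeasureTheory

variable {V : Type*}

/-! Every path from `x` starts at `x`, so the union lies in `φ x ⊆ (0, 2 - ε)`. It is disjoint
from `φ v`, which also lies in `(0, 2 - ε)` and has measure one, hence its measure is at most
`(2 - ε) - 1`. -/

open Set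

theorem measure_le_sub_of_disjoint {α : Type*} [MeasurableSpace α] {μ : Measure α}
    {s t u : Set α} (hs : MeasurableSet s) (hμs : μ s ≠ ⊤) (hsu : s ⊆ u) (htu : t ⊆ u)
    (hst : Disjoint s t) : μ t ≤ μ u - μ s := by
  rw [← measure_sdiff hsu hs.nullMeasurableSet hμs]
  exact measure_mono (subset_sdiff.2 ⟨htu, hst.symm⟩)

/-- The measure of the union over paths from `x` to `y` of the intersections of the assigned
sets is at most `1 - ε`, given a common neighbor `v` of `x` and `y` whose set avoids each such
intersection. -/
theorem stmt15 (G : SimpleGraph V) (ε : ℝ) (φ : V → Set ℝ)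
    (hφ : FracArb G (2 - ε) φ) (x y : V)
    (hv : ∃ v : V, G.Adj v x ∧ G.Adj v y ∧
      ∀ p : G.Walk x y, p.IsPath → Disjoint (φ v) (⋂ u ∈ p.support, φ u)) :
    volume (⋃ p : {p : G.Walk x y // p.IsPath}, ⋂ u ∈ (p : G.Walk x y).support, φ u) ≤
      ENNReal.ofReal (1 - ε) := by
  obtain ⟨hmeas, hsub, hvol, -⟩ := hφ
  obtain ⟨v, -, -, hdisj⟩ := hv
  have hx : (⋃ p : {p : G.Walk x y // p.IsPath}, ⋂ u ∈ (p : G.Walk x y).support, φ u) ⊆ φ x :=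
    iUnion_subset fun p => biInter_subset_of_mem p.1.start_mem_support
  calc _ ≤ volume (Ioo 0 (2 - ε)) - volume (φ v) :=
        measure_le_sub_of_disjoint (hmeas v) (by simp [hvol]) (hsub v) (hx.trans (hsub x))
          (disjoint_iUnion_right.2 fun p => hdisj p p.2)
    _ = ENNReal.ofReal (1 - ε) := by
        rw [Real.volume_Ioo, hvol, ← ENNReal.ofReal_one, ← ENNReal.ofReal_sub _ zero_le_one]
        ring_nf
end
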